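/- Let k be a field of characteristic zero, (R,Δ) a commutative differential k-algebra with R noetherian, H = (kˣ)^r an algebraic torus acting rationally on (R,Δ), and J a prime (H,Δ)-ideal of R. Then: (a) the localization R_J of R/J at its nonzero H-eigenvectors is a graded field with respect to its induced ℤ^r-grading; and (b) localization (P ↦ (P/J)R_J) and contraction (Q ↦ the inverse image in R of Q ∩ (R/J)) are mutually inverse homeomorphisms between the stratum Δ-spec_J R = {P ∈ Δ-spec R : (P:H) = J} and Δ-spec R_J. -/
import Mathlib


section Defs

variable {k R : Type*} [CommRing k] [CommRing R] [Algebra k R]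

/-- An ideal stable under all derivations in `Δ`. -/
def IsDeltaIdeal (Δ : Set (Derivation k R R)) (I : Ideal R) : Prop :=
  ∀ δ ∈ Δ, ∀ x ∈ I, δ x ∈ I

/-- The `Δ`-core of an ideal `J`: the largest `Δ`-stable ideal contained in `J`. -/
def deltaCore (Δ : Set (Derivation k R R)) (J : Ideal R) : Ideal R :=
  sSup {I : Ideal R | IsDeltaIdeal Δ I ∧ I ≤ J}

/-- A `Δ`-prime ideal: a proper `Δ`-ideal `Q` such that whenever a product of two
`Δ`-ideals lies in `Q`, one of them lies in `Q`. -/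
def IsDeltaPrime (Δ : Set (Derivation k R R)) (Q : Ideal R) : Prop :=
  Q ≠ ⊤ ∧ IsDeltaIdeal Δ Q ∧
    ∀ I J : Ideal R, IsDeltaIdeal Δ I → IsDeltaIdeal Δ J → I * J ≤ Q → I ≤ Q ∨ J ≤ Q

/-- A `Δ`-primitive ideal: the `Δ`-core of a maximal ideal. -/
def IsDeltaPrimitive (Δ : Set (Derivation k R R)) (P : Ideal R) : Prop :=
  ∃ M : Ideal R, M.IsMaximal ∧ deltaCore Δ M = P

end Defs

/-- The `Δ`-center of `R`: elements annihilated by every derivation in `Δ`. -/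
def deltaCenter {k R : Type*} [CommRing k] [CommRing R] [Algebra k R]
    (Δ : Set (Derivation k R R)) : Subalgebra k R where
  carrier := {r : R | ∀ δ ∈ Δ, δ r = 0}
  mul_mem' := by
    intro a b ha hb δ hδ
    rw [Derivation.leibniz, ha δ hδ, hb δ hδ, smul_zero, smul_zero, add_zero]
  add_mem' := by
    intro a b ha hb δ hδ
    rw [map_add, ha δ hδ, hb δ hδ, add_zero]
  algebraMap_mem' := by
    intro c δ hδ
    simp

/-- The homogeneous `k`-derivations of degree `d` with respect to a grading `𝒜`:
those `δ` with `δ(R_g) ⊆ R_{g+d}` for all `g`. -/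
def homogeneousDerivations {k R G : Type*} [CommRing k] [CommRing R] [Algebra k R]
    [AddCommGroup G] (𝒜 : G → Submodule k R) (d : G) :
    Submodule k (Derivation k R R) where
  carrier := {δ : Derivation k R R | ∀ g : G, ∀ x ∈ 𝒜 g, δ x ∈ 𝒜 (g + d)}
  add_mem' := by
    intro a b ha hb g x hx
    rw [Derivation.add_apply]
    exact Submodule.add_mem _ (ha g x hx) (hb g x hx)
  zero_mem' := by
    intro g x hx
    simp
  smul_mem' := by
    intro c δ hδ g x hx
    rw [Derivation.smul_apply]
    exact Submodule.smul_mem _ c (hδ g x hx)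

/-- `R` is a graded field with respect to `𝒜`: a domain in which every nonzero
homogeneous element is invertible. -/
def IsGradedField {k R G : Type*} [CommRing k] [CommRing R] [Algebra k R]
    (𝒜 : G → Submodule k R) : Prop :=
  IsDomain R ∧ ∀ (g : G) (x : R), x ∈ 𝒜 g → x ≠ 0 → IsUnit x

section TorusDefs

variable {k R : Type*} [CommRing k] [CommRing R] [Algebra k R] {r : ℕ}

/-- The `H`-core `(P:H) = ∩_{h∈H} h(P)` of an ideal, for the torus `H = (kˣ)^r`
acting via `ρ`. -/
def torusCore (ρ : (Fin r → kˣ) →* (R ≃ₐ[k] R)) (P : Ideal R) : Ideal R :=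
  ⨅ h : Fin r → kˣ, Ideal.comap (ρ h) P

/-- An `H`-ideal: an ideal stable under the torus action. -/
def IsTorusIdeal (ρ : (Fin r → kˣ) →* (R ≃ₐ[k] R)) (I : Ideal R) : Prop :=
  ∀ (h : Fin r → kˣ), ∀ x ∈ I, ρ h x ∈ I

/-- An `H`-prime ideal: a proper `H`-ideal `Q` such that whenever a product of two
`H`-ideals lies in `Q`, one of them lies in `Q`. -/
def IsTorusPrime (ρ : (Fin r → kˣ) →* (R ≃ₐ[k] R)) (Q : Ideal R) : Prop :=
  Q ≠ ⊤ ∧ IsTorusIdeal ρ Q ∧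
    ∀ I J : Ideal R, IsTorusIdeal ρ I → IsTorusIdeal ρ J → I * J ≤ Q → I ≤ Q ∨ J ≤ Q

/-- An `(H,Δ)`-ideal: an ideal stable under both the torus action and `Δ`. -/
def IsTorusDeltaIdeal (ρ : (Fin r → kˣ) →* (R ≃ₐ[k] R)) (Δ : Set (Derivation k R R))
    (I : Ideal R) : Prop :=
  IsTorusIdeal ρ I ∧ IsDeltaIdeal Δ I

/-- An `(H,Δ)`-prime ideal: a proper `(H,Δ)`-ideal `Q` such that whenever a product of
two `(H,Δ)`-ideals lies in `Q`, one of them lies in `Q`. -/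
def IsTorusDeltaPrime (ρ : (Fin r → kˣ) →* (R ≃ₐ[k] R)) (Δ : Set (Derivation k R R))
    (Q : Ideal R) : Prop :=
  Q ≠ ⊤ ∧ IsTorusDeltaIdeal ρ Δ Q ∧
    ∀ I J : Ideal R, IsTorusDeltaIdeal ρ Δ I → IsTorusDeltaIdeal ρ Δ J →
      I * J ≤ Q → I ≤ Q ∨ J ≤ Q

/-- The action `ρ` of the torus `H = (kˣ)^r` on `R` is rational with eigenspace
decomposition `𝒜`: each `x ∈ 𝒜 f` is an `H`-eigenvector with rational eigenvalue
`h ↦ ∏ i, (h i)^(f i)`.  (Together with `GradedAlgebra 𝒜`, this says `R` is the direct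
sum of its `H`-eigenspaces and all the eigenvalues are rational.) -/
def IsRationalTorusAction (ρ : (Fin r → kˣ) →* (R ≃ₐ[k] R))
    (𝒜 : (Fin r → ℤ) → Submodule k R) : Prop :=
  ∀ (f : Fin r → ℤ), ∀ x ∈ 𝒜 f, ∀ h : Fin r → kˣ,
    ρ h x = ((∏ i, h i ^ f i : kˣ) : k) • x

/-- The subspace `Δ ⊆ Der_k(R)` is the (direct) sum of its `H`-eigenspaces with rational
eigenvalues: it is spanned by the `H`-eigenvectors `δ` it contains, i.e. those with
`h·δ = (∏ i (h i)^(d i)) δ` for some `d ∈ ℤ^r`.  (Such a `Δ` is automatically stable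
under the induced `H`-action.) -/
def IsRationalDeltaAction (ρ : (Fin r → kˣ) →* (R ≃ₐ[k] R))
    (Δ : Submodule k (Derivation k R R)) : Prop :=
  Δ = Submodule.span k {δ : Derivation k R R | δ ∈ Δ ∧ ∃ d : Fin r → ℤ,
    ∀ (h : Fin r → kˣ) (x : R), ρ h (δ x) = ((∏ i, h i ^ d i : kˣ) : k) • δ (ρ h x)}

end TorusDefs

section LocalizationDefs

variable {k R : Type*} [CommRing k] [CommRing R] [Algebra k R] {r : ℕ}

/-- The multiplicative set `E_J` of nonzero `H`-eigenvectors (equivalently, nonzero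
homogeneous elements) of `R/J`. -/
def eigenMonoid (𝒜 : (Fin r → ℤ) → Submodule k R) (J : Ideal R) : Submonoid (R ⧸ J) :=
  Submonoid.closure
    {x : R ⧸ J | x ≠ 0 ∧ ∃ f : Fin r → ℤ, ∃ a ∈ 𝒜 f, Ideal.Quotient.mk J a = x}

/-- The localization `R_J = (R/J)[E_J⁻¹]`. -/
abbrev torusLocalization (𝒜 : (Fin r → ℤ) → Submodule k R) (J : Ideal R) :=
  Localization (eigenMonoid 𝒜 J)

/-- The set of derivations of `R_J` induced by the derivations in `Δ` (each `δ ∈ Δ`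
descends to `R/J` and extends uniquely to the localization `R_J`). -/
def inducedDerivations (𝒜 : (Fin r → ℤ) → Submodule k R) (J : Ideal R)
    (Δ : Set (Derivation k R R)) :
    Set (Derivation k (torusLocalization 𝒜 J) (torusLocalization 𝒜 J)) :=
  {D | ∃ δ ∈ Δ, ∀ a : R,
    D (algebraMap (R ⧸ J) (torusLocalization 𝒜 J) (Ideal.Quotient.mk J a)) =
      algebraMap (R ⧸ J) (torusLocalization 𝒜 J) (Ideal.Quotient.mk J (δ a))}

/-- An element of `R_J` is homogeneous (with respect to the grading induced by `𝒜`)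
if it is a quotient of two homogeneous elements of `R/J`. -/
def IsHomogeneousFraction (𝒜 : (Fin r → ℤ) → Submodule k R) (J : Ideal R)
    (x : torusLocalization 𝒜 J) : Prop :=
  ∃ (g g' : Fin r → ℤ) (a s : R), a ∈ 𝒜 g' ∧ s ∈ 𝒜 g ∧ Ideal.Quotient.mk J s ≠ 0 ∧
    x * algebraMap (R ⧸ J) (torusLocalization 𝒜 J) (Ideal.Quotient.mk J s) =
      algebraMap (R ⧸ J) (torusLocalization 𝒜 J) (Ideal.Quotient.mk J a)

/-- Extension of an ideal of `R` to `R_J` (localization of the image in `R/J`). -/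
def extendToLocalization (𝒜 : (Fin r → ℤ) → Submodule k R) (J : Ideal R) (P : Ideal R) :
    Ideal (torusLocalization 𝒜 J) :=
  Ideal.map (algebraMap (R ⧸ J) (torusLocalization 𝒜 J)) (Ideal.map (Ideal.Quotient.mk J) P)

/-- Contraction of an ideal of `R_J` back to an ideal of `R`. -/
def contractFromLocalization (𝒜 : (Fin r → ℤ) → Submodule k R) (J : Ideal R)
    (Q : Ideal (torusLocalization 𝒜 J)) : Ideal R :=
  Ideal.comap (Ideal.Quotient.mk J)
    (Ideal.comap (algebraMap (R ⧸ J) (torusLocalization 𝒜 J)) Q)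

end LocalizationDefs


section DerivQuot
variable {k R : Type*} [CommRing k] [CommRing R] [Algebra k R] (J : Ideal R)
variable (dv : Derivation k R R) (hdv : ∀ x ∈ J, dv x ∈ J)

noncomputable def quotDerFun : R ⧸ J → R ⧸ J := fun x =>
  Quotient.liftOn' x (fun a => Ideal.Quotient.mk J (dv a)) (by
    intro a b h
    have hab : a - b ∈ J := by
      rwa [Submodule.quotientRel_def] at h
    have h2 : dv a - dv b ∈ J := by simpa using hdv _ hab
    exact Ideal.Quotient.eq.mpr h2)

lemma quotDerFun_mk (a : R) :
    quotDerFun J dv hdv (Ideal.Quotient.mk J a) = Ideal.Quotient.mk J (dv a) := rfl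

noncomputable def quotDerivation : Derivation k (R ⧸ J) (R ⧸ J) where
  toFun := quotDerFun J dv hdv
  map_add' x y := by
    obtain ⟨a, rfl⟩ := Ideal.Quotient.mk_surjective x
    obtain ⟨b, rfl⟩ := Ideal.Quotient.mk_surjective y
    rw [← map_add, quotDerFun_mk, quotDerFun_mk, quotDerFun_mk, map_add, map_add]
  map_smul' c x := by
    obtain ⟨a, rfl⟩ := Ideal.Quotient.mk_surjective x
    show quotDerFun J dv hdv (c • Ideal.Quotient.mk J a)
        = c • quotDerFun J dv hdv (Ideal.Quotient.mk J a)
    have h1 : c • Ideal.Quotient.mk J a = Ideal.Quotient.mk J (c • a) := by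
      rw [← Ideal.Quotient.mkₐ_eq_mk k J, ← map_smul]
    rw [h1, quotDerFun_mk, quotDerFun_mk, dv.map_smul, ← Ideal.Quotient.mkₐ_eq_mk k J, map_smul]
  map_one_eq_zero' := by
    have : (1 : R ⧸ J) = Ideal.Quotient.mk J 1 := rfl
    simp only [LinearMap.coe_mk, AddHom.coe_mk, this, quotDerFun_mk]
    simp
  leibniz' x y := by
    obtain ⟨a, rfl⟩ := Ideal.Quotient.mk_surjective x
    obtain ⟨b, rfl⟩ := Ideal.Quotient.mk_surjective y
    show quotDerFun J dv hdv (Ideal.Quotient.mk J a * Ideal.Quotient.mk J b)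
        = Ideal.Quotient.mk J a • quotDerFun J dv hdv (Ideal.Quotient.mk J b)
          + Ideal.Quotient.mk J b • quotDerFun J dv hdv (Ideal.Quotient.mk J a)
    rw [← map_mul, quotDerFun_mk, quotDerFun_mk, quotDerFun_mk, Derivation.leibniz]
    simp only [smul_eq_mul, map_add, map_mul]

@[simp] lemma quotDerivation_mk (a : R) :
    quotDerivation J dv hdv (Ideal.Quotient.mk J a) = Ideal.Quotient.mk J (dv a) := rfl

end DerivQuot

section DerivLoc
variable {k A : Type*} [CommRing k] [CommRing A] [Algebra k A] [IsDomain A]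
variable (M : Submonoid A) (hM : M ≤ nonZeroDivisors A) (dv : Derivation k A A)

noncomputable def locDerFun (z : Localization M) : Localization M :=
  Localization.liftOn z
    (fun a s => IsLocalization.mk' (Localization M) (dv a * s - a * dv (s : A)) (s * s))
    (by
      intro a c s t h
      rw [Localization.r_iff_exists] at h
      obtain ⟨u, hu⟩ := h
      have hune : (u : A) ≠ 0 := nonZeroDivisors.ne_zero (hM u.2)
      have hu' : (t : A) * a = (s : A) * c := mul_left_cancel₀ hune hu
      have hd := congrArg dv hu'
      simp only [Derivation.leibniz, smul_eq_mul] at hd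
      rw [IsLocalization.mk'_eq_iff_eq]
      apply congrArg
      push_cast
      linear_combination ((t : A) * (s : A)) * hd
        - ((t : A) * dv (s : A) + (s : A) * dv (t : A)) * hu')

lemma locDerFun_mk (a : A) (s : M) :
    locDerFun M hM dv (Localization.mk a s)
      = IsLocalization.mk' (Localization M) (dv a * s - a * dv (s : A)) (s * s) :=
  Localization.liftOn_mk _ _ _ _

lemma locDerFun_algebraMap (a : A) :
    locDerFun M hM dv (algebraMap A (Localization M) a)
      = algebraMap A (Localization M) (dv a) := by
  rw [← Localization.mk_one_eq_algebraMap, ← Localization.mk_one_eq_algebraMap, locDerFun_mk]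
  simp only [OneMemClass.coe_one, map_one, Derivation.map_one_eq_zero, mul_one, mul_zero,
    sub_zero, one_mul]
  rw [Localization.mk_eq_mk']


lemma locDerFun_add (z w : Localization M) :
    locDerFun M hM dv (z + w) = locDerFun M hM dv z + locDerFun M hM dv w := by
  induction z using Localization.induction_on with
  | H p =>
    induction w using Localization.induction_on with
    | H q =>
      obtain ⟨a, s⟩ := p
      obtain ⟨b, t⟩ := q
      rw [Localization.add_mk, locDerFun_mk, locDerFun_mk, locDerFun_mk]
      simp only [← Localization.mk_eq_mk']
      rw [Localization.add_mk, Localization.mk_eq_mk_iff, Localization.r_iff_exists]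
      use 1
      simp only [Submonoid.coe_mul, map_add, Derivation.leibniz, smul_eq_mul, map_mul,
        Submonoid.coe_one, one_mul]
      ring

lemma locDerFun_mul (z w : Localization M) :
    locDerFun M hM dv (z * w) = z * locDerFun M hM dv w + w * locDerFun M hM dv z := by
  induction z using Localization.induction_on with
  | H p =>
    induction w using Localization.induction_on with
    | H q =>
      obtain ⟨a, s⟩ := p
      obtain ⟨b, t⟩ := q
      rw [Localization.mk_mul, locDerFun_mk, locDerFun_mk, locDerFun_mk]
      simp only [← Localization.mk_eq_mk']
      rw [Localization.mk_mul, Localization.mk_mul, Localization.add_mk,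
        Localization.mk_eq_mk_iff, Localization.r_iff_exists]
      use 1
      simp only [Submonoid.coe_mul, map_add, Derivation.leibniz, smul_eq_mul, map_mul,
        Submonoid.coe_one, one_mul]
      ring

noncomputable def locDerivation : Derivation k (Localization M) (Localization M) where
  toFun := locDerFun M hM dv
  map_add' := locDerFun_add M hM dv
  map_smul' c z := by
    show locDerFun M hM dv (c • z) = c • locDerFun M hM dv z
    have h1 : c • z = algebraMap A (Localization M) (algebraMap k A c) * z := by
      rw [← IsScalarTower.algebraMap_apply k A (Localization M), ← Algebra.smul_def]
    have h2 : c • locDerFun M hM dv z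
        = algebraMap A (Localization M) (algebraMap k A c) * locDerFun M hM dv z := by
      rw [← IsScalarTower.algebraMap_apply k A (Localization M), ← Algebra.smul_def]
    rw [h1, h2, locDerFun_mul, locDerFun_algebraMap, Derivation.map_algebraMap, map_zero,
      mul_zero, add_zero]
  map_one_eq_zero' := by
    show locDerFun M hM dv 1 = 0
    have : (1 : Localization M) = algebraMap A (Localization M) 1 := by rw [map_one]
    rw [this, locDerFun_algebraMap, Derivation.map_one_eq_zero, map_zero]
  leibniz' z w := by
    show locDerFun M hM dv (z * w) = _
    rw [locDerFun_mul]
    simp [smul_eq_mul]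

lemma locDerivation_algebraMap (a : A) :
    locDerivation M hM dv (algebraMap A (Localization M) a)
      = algebraMap A (Localization M) (dv a) := locDerFun_algebraMap M hM dv a

end DerivLoc

section Chars
variable {k : Type*} [Field k] [CharZero k] {r : ℕ}

lemma two_zpow_inj {m n : ℤ} (hmn : (2 : k) ^ m = (2 : k) ^ n) : m = n := by
  have key : ∀ p : ℕ, (2 : k) ^ (p : ℤ) = 1 → p = 0 := by
    intro p hp
    rw [zpow_natCast] at hp
    have h2 : ((2 ^ p : ℕ) : k) = ((1 : ℕ) : k) := by push_cast; simpa using hp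
    have h3 : (2:ℕ) ^ p = 1 := Nat.cast_injective h2
    by_contra hp0
    have h4 : (2:ℕ) ^ p ≥ 2 ^ 1 := Nat.pow_le_pow_right (by norm_num) (by omega)
    omega
  have h2 : (2 : k) ≠ 0 := two_ne_zero
  rcases le_total m n with h | h
  · have h3 : (2 : k) ^ (n - m) = 1 := by
      rw [zpow_sub₀ h2, hmn, ← zpow_sub₀ h2, sub_self, zpow_zero]
    have h4 : (n - m).toNat = 0 := key _ (by rwa [Int.toNat_of_nonneg (by omega)])
    omega
  · have h3 : (2 : k) ^ (m - n) = 1 := by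
      rw [zpow_sub₀ h2, hmn, ← zpow_sub₀ h2, sub_self, zpow_zero]
    have h4 : (m - n).toNat = 0 := key _ (by rwa [Int.toNat_of_nonneg (by omega)])
    omega

/-- The character of the torus attached to `f : ℤ^r`. -/
noncomputable def charOf (k : Type*) [Field k] {r : ℕ} (f : Fin r → ℤ) :
    (Fin r → kˣ) →* k where
  toFun h := ((∏ i, h i ^ f i : kˣ) : k)
  map_one' := by simp
  map_mul' h h' := by
    show ((∏ i, (h i * h' i) ^ f i : kˣ) : k) = _
    simp only [mul_zpow, Finset.prod_mul_distrib]
    push_cast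
    ring

lemma charOf_injective : Function.Injective (charOf k (r := r)) := by
  intro f g hfg
  funext i
  have h2 : ((2 : k) ≠ 0) := two_ne_zero
  set u2 : kˣ := Units.mk0 (2 : k) h2 with hu2
  set h : Fin r → kˣ := Function.update (1 : Fin r → kˣ) i u2 with hh
  have hval : ∀ f' : Fin r → ℤ, charOf k f' h = (2 : k) ^ (f' i) := by
    intro f'
    have : (∏ j, h j ^ f' j : kˣ) = u2 ^ f' i := by
      rw [Finset.prod_eq_single i]
      · rw [hh, Function.update_self]
      · intro j _ hj
        rw [hh, Function.update_of_ne hj]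
        simp
      · intro hi; exact absurd (Finset.mem_univ i) hi
    show ((∏ j, h j ^ f' j : kˣ) : k) = _
    rw [this]
    push_cast [hu2]
    rfl
  have := hval f
  rw [hfg] at this
  rw [hval g] at this
  exact (two_zpow_inj this).symm

lemma chars_indep {V : Type*} [AddCommGroup V] [Module k V]
    (F : Finset (Fin r → ℤ)) (v : (Fin r → ℤ) → V)
    (hsum : ∀ h : Fin r → kˣ, ∑ f ∈ F, ((∏ i, h i ^ f i : kˣ) : k) • v f = 0) :
    ∀ f ∈ F, v f = 0 := by
  intro f hf
  rw [← Module.forall_dual_apply_eq_zero_iff k]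
  intro lam
  have li := (linearIndependent_monoidHom (Fin r → kˣ) k).comp (charOf k (r := r))
    charOf_injective
  rw [linearIndependent_iff'] at li
  refine li F (fun f => lam (v f)) ?_ f hf
  funext h
  have := congrArg lam (hsum h)
  rw [map_sum, map_zero] at this
  simpa [Finset.sum_apply, charOf, mul_comm] using this

end Chars

section MainAux

open Ideal

variable {k R : Type*} [Field k] [CharZero k] [CommRing R] [Algebra k R]
variable {r : ℕ} (ρ : (Fin r → kˣ) →* (R ≃ₐ[k] R)) (𝒜 : (Fin r → ℤ) → Submodule k R)
variable [GradedAlgebra 𝒜]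

lemma component_mem_of_torusIdeal (hrat : IsRationalTorusAction ρ 𝒜) {I : Ideal R}
    (hI : ∀ (h : Fin r → kˣ), ∀ x ∈ I, ρ h x ∈ I) {x : R} (hx : x ∈ I) (f : Fin r → ℤ) :
    (DirectSum.decompose 𝒜 x f : R) ∈ I := by
  classical
  by_cases hf : f ∈ (DirectSum.decompose 𝒜 x).support
  swap
  · rw [DFinsupp.notMem_support_iff] at hf
    rw [hf]
    simpa using I.zero_mem
  have hmain : ∀ g ∈ (DirectSum.decompose 𝒜 x).support,
      Ideal.Quotient.mkₐ k I ((DirectSum.decompose 𝒜 x g : R)) = 0 := by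
    apply chars_indep (k := k)
    intro h
    have h1 : ρ h x = ∑ g ∈ (DirectSum.decompose 𝒜 x).support,
        ((∏ i, h i ^ g i : kˣ) : k) • (DirectSum.decompose 𝒜 x g : R) := by
      conv_lhs => rw [← DirectSum.sum_support_decompose 𝒜 x]
      rw [map_sum]
      exact Finset.sum_congr rfl fun g _ => hrat g _ (SetLike.coe_mem _) h
    have h2 : Ideal.Quotient.mkₐ k I (ρ h x) = 0 := by
      rw [Ideal.Quotient.mkₐ_eq_mk, Ideal.Quotient.eq_zero_iff_mem]
      exact hI h x hx
    rw [h1, map_sum] at h2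
    rw [← h2]
    exact Finset.sum_congr rfl fun g _ => by rw [map_smul]
  have := hmain f hf
  rwa [Ideal.Quotient.mkₐ_eq_mk, Ideal.Quotient.eq_zero_iff_mem] at this

/-- The multiplicative set of homogeneous elements of `R` not in `J`. -/
def homMonoid (𝒜 : (Fin r → ℤ) → Submodule k R) (J : Ideal R) : Submonoid R :=
  Submonoid.closure {a : R | (∃ f, a ∈ 𝒜 f) ∧ a ∉ J}

lemma homMonoid_spec (J : Ideal R) (hJp : J.IsPrime) :
    ∀ e ∈ homMonoid 𝒜 J, (∃ f, e ∈ 𝒜 f) ∧ e ∉ J := by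
  intro e he
  induction he using Submonoid.closure_induction with
  | mem a ha => exact ha
  | one =>
    refine ⟨⟨0, SetLike.one_mem_graded 𝒜⟩, fun h1 => hJp.ne_top ?_⟩
    rwa [Ideal.eq_top_iff_one]
  | mul a b ha hb iha ihb =>
    obtain ⟨⟨fa, hfa⟩, haJ⟩ := iha
    obtain ⟨⟨fb, hfb⟩, hbJ⟩ := ihb
    exact ⟨⟨fa + fb, SetLike.mul_mem_graded hfa hfb⟩,
      fun hab => (hJp.mem_or_mem hab).elim haJ hbJ⟩

lemma eigenMonoid_lift (J : Ideal R) :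
    ∀ m ∈ eigenMonoid 𝒜 J, ∃ e ∈ homMonoid 𝒜 J, Ideal.Quotient.mk J e = m := by
  intro m hm
  induction hm using Submonoid.closure_induction with
  | mem a ha =>
    obtain ⟨ha0, f, b, hbf, rfl⟩ := ha
    refine ⟨b, Submonoid.subset_closure ⟨⟨f, hbf⟩, fun hbJ => ha0 ?_⟩, rfl⟩
    rwa [Ideal.Quotient.eq_zero_iff_mem]
  | one => exact ⟨1, one_mem _, map_one _⟩
  | mul a b _ _ iha ihb =>
    obtain ⟨e₁, he₁, rfl⟩ := iha
    obtain ⟨e₂, he₂, rfl⟩ := ihb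
    exact ⟨e₁ * e₂, mul_mem he₁ he₂, map_mul _ _ _⟩

lemma homMonoid_mk_mem (J : Ideal R) (hJp : J.IsPrime) :
    ∀ e ∈ homMonoid 𝒜 J, Ideal.Quotient.mk J e ∈ eigenMonoid 𝒜 J := by
  intro e he
  obtain ⟨⟨f, hf⟩, heJ⟩ := homMonoid_spec 𝒜 J hJp e he
  exact Submonoid.subset_closure
    ⟨fun h0 => heJ (Ideal.Quotient.eq_zero_iff_mem.mp h0), f, e, hf, rfl⟩

lemma eigen_le_nzd (J : Ideal R) (hJp : J.IsPrime) :
    eigenMonoid 𝒜 J ≤ nonZeroDivisors (R ⧸ J) := by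
  haveI := hJp
  rw [eigenMonoid, Submonoid.closure_le]
  intro x hx
  exact mem_nonZeroDivisors_of_ne_zero hx.1

lemma homog_mem_of_core (hrat : IsRationalTorusAction ρ 𝒜) {P J : Ideal R}
    (hcore : torusCore ρ P = J) {x : R} {f : Fin r → ℤ}
    (hxf : x ∈ 𝒜 f) (hxP : x ∈ P) : x ∈ J := by
  rw [← hcore, torusCore, Submodule.mem_iInf]
  intro h
  rw [Ideal.mem_comap, hrat f x hxf h, Algebra.smul_def]
  exact P.mul_mem_left _ hxP

lemma torusCore_le (P : Ideal R) : torusCore ρ P ≤ P := by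
  intro x hx
  have := (Submodule.mem_iInf _).mp hx 1
  rw [Ideal.mem_comap, map_one] at this
  simpa using this

lemma torusCore_stable {P : Ideal R} {x : R} (hx : x ∈ torusCore ρ P) (h : Fin r → kˣ) :
    ρ h x ∈ torusCore ρ P := by
  rw [torusCore, Submodule.mem_iInf]
  intro h'
  rw [Ideal.mem_comap]
  have h1 : (ρ h') ((ρ h) x) = (ρ (h' * h)) x := by rw [_root_.map_mul]; rfl
  rw [h1]
  exact (Submodule.mem_iInf _).mp hx (h' * h)

lemma sat_of_deltaPrime [IsNoetherianRing R] (Δs : Set (Derivation k R R))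
    {P J : Ideal R} (hJp : J.IsPrime) (hΔP : IsDeltaPrime Δs P)
    (hcore : torusCore ρ P = J) (hrat : IsRationalTorusAction ρ 𝒜) :
    ∀ e ∈ homMonoid 𝒜 J, ∀ x : R, e * x ∈ P → x ∈ P := by
  classical
  set Psat : Ideal R :=
    { carrier := {x | ∃ e ∈ homMonoid 𝒜 J, e * x ∈ P}
      add_mem' := by
        rintro a b ⟨e, he, hea⟩ ⟨e', he', heb⟩
        refine ⟨e * e', mul_mem he he', ?_⟩
        have h1 : e * e' * (a + b) = e' * (e * a) + e * (e' * b) := by ring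
        rw [h1]
        exact add_mem (P.mul_mem_left _ hea) (P.mul_mem_left _ heb)
      zero_mem' := ⟨1, one_mem _, by simpa using P.zero_mem⟩
      smul_mem' := by
        rintro c x ⟨e, he, hex⟩
        refine ⟨e, he, ?_⟩
        have h1 : e * (c • x) = c * (e * x) := by simp [smul_eq_mul]; ring
        rw [h1]
        exact P.mul_mem_left _ hex } with hPsat
  have hPsatΔ : IsDeltaIdeal Δs Psat := by
    rintro δ hδ x ⟨e, he, hex⟩
    refine ⟨e * e, mul_mem he he, ?_⟩
    have h1 : δ (e * e * x) ∈ P := by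
      apply hΔP.2.1 δ hδ
      have : e * e * x = e * (e * x) := by ring
      rw [this]
      exact P.mul_mem_left _ hex
    have h2 : e * e * δ x = δ (e * e * x) - (δ e * (e * x) + δ e * (e * x)) := by
      rw [Derivation.leibniz, Derivation.leibniz]
      simp only [smul_eq_mul]
      ring
    rw [h2]
    exact sub_mem h1 (add_mem (P.mul_mem_left _ hex) (P.mul_mem_left _ hex))
  have hPPsat : P ≤ Psat := fun x hx => ⟨1, one_mem _, by simpa using hx⟩
  set B : Ideal R := Submodule.colon P Psat with hB
  have hBΔ : IsDeltaIdeal Δs B := by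
    intro δ hδ y hy
    rw [Submodule.mem_colon] at hy ⊢
    intro z hz
    have h1 : δ (y * z) ∈ P := hΔP.2.1 δ hδ _ (by
      simpa [smul_eq_mul] using hy z hz)
    have h2 : y * δ z ∈ P := by
      simpa [smul_eq_mul] using hy (δ z) (hPsatΔ δ hδ z hz)
    have h3 : δ y • z = δ (y * z) - y * δ z := by
      rw [Derivation.leibniz]
      simp only [smul_eq_mul]
      ring
    rw [h3]
    exact sub_mem h1 h2
  have hBPsat : B * Psat ≤ P := Ideal.mul_le.mpr fun b hb z hz => by
    simpa [smul_eq_mul] using (Submodule.mem_colon.mp hb) z hz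
  rcases hΔP.2.2 B Psat hBΔ hPsatΔ hBPsat with hBP | hPsatP
  · exfalso
    obtain ⟨S, hS⟩ := (IsNoetherian.noetherian Psat : Psat.FG)
    have hmem : ∀ a : {x // x ∈ S}, ∃ e ∈ homMonoid 𝒜 J, e * (a : R) ∈ P := by
      rintro ⟨a, ha⟩
      have : (a : R) ∈ Psat := by rw [← hS]; exact Ideal.subset_span ha
      exact this
    choose g hg1 hg2 using hmem
    set estar : R := ∏ a ∈ S.attach, g a with hestar
    have hememb : estar ∈ homMonoid 𝒜 J := prod_mem fun a _ => hg1 a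
    have hBmem : estar ∈ B := by
      rw [Submodule.mem_colon]
      intro z hz
      rw [← hS] at hz
      simp only [smul_eq_mul]
      induction hz using Submodule.span_induction with
      | mem a ha =>
        have h1 : estar = g ⟨a, ha⟩ * ∏ b ∈ S.attach.erase ⟨a, ha⟩, g b :=
          (Finset.mul_prod_erase S.attach g (Finset.mem_attach S ⟨a, ha⟩)).symm
        have h2 : estar * a = (∏ b ∈ S.attach.erase ⟨a, ha⟩, g b) * (g ⟨a, ha⟩ * a) := by
          rw [h1]; ring
        rw [h2]
        exact P.mul_mem_left _ (hg2 ⟨a, ha⟩)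
      | zero => simpa using P.zero_mem
      | add a b _ _ iha ihb => rw [mul_add]; exact add_mem iha ihb
      | smul c a _ iha =>
        have h1 : estar * (c • a) = c * (estar * a) := by simp [smul_eq_mul]; ring
        rw [h1]
        exact P.mul_mem_left _ iha
    have hestarP : estar ∈ P := hBP hBmem
    obtain ⟨⟨f, hf⟩, heJ⟩ := homMonoid_spec 𝒜 J hJp estar hememb
    exact heJ (homog_mem_of_core ρ 𝒜 hrat hcore hf hestarP)
  · intro e he x hex
    exact hPsatP ⟨e, he, hex⟩

end MainAux



section LocAux

variable {k R : Type*} [Field k] [CharZero k] [CommRing R] [Algebra k R]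
variable {r : ℕ} (ρ : (Fin r → kˣ) →* (R ≃ₐ[k] R)) (𝒜 : (Fin r → ℤ) → Submodule k R)
variable [GradedAlgebra 𝒜] (J : Ideal R)

lemma ext_contract_eq (Q : Ideal (torusLocalization 𝒜 J)) :
    extendToLocalization 𝒜 J (contractFromLocalization 𝒜 J Q) = Q := by
  rw [extendToLocalization, contractFromLocalization,
    Ideal.map_comap_of_surjective _ Ideal.Quotient.mk_surjective,
    IsLocalization.map_comap (eigenMonoid 𝒜 J)]

lemma le_contract_ext (P : Ideal R) :
    P ≤ contractFromLocalization 𝒜 J (extendToLocalization 𝒜 J P) := fun x hx =>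
  Ideal.mem_map_of_mem _ (Ideal.mem_map_of_mem _ hx)

lemma ext_mono {P P' : Ideal R} (h : P ≤ P') :
    extendToLocalization 𝒜 J P ≤ extendToLocalization 𝒜 J P' :=
  Ideal.map_mono (Ideal.map_mono h)

lemma contract_mono {Q Q' : Ideal (torusLocalization 𝒜 J)} (h : Q ≤ Q') :
    contractFromLocalization 𝒜 J Q ≤ contractFromLocalization 𝒜 J Q' :=
  Ideal.comap_mono (Ideal.comap_mono h)

lemma ext_mul (A B : Ideal R) :
    extendToLocalization 𝒜 J (A * B)
      = extendToLocalization 𝒜 J A * extendToLocalization 𝒜 J B := by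
  rw [extendToLocalization, Ideal.map_mul, Ideal.map_mul]
  rfl

lemma contract_mul_le (A B : Ideal (torusLocalization 𝒜 J)) :
    contractFromLocalization 𝒜 J A * contractFromLocalization 𝒜 J B ≤
      contractFromLocalization 𝒜 J (A * B) :=
  Ideal.mul_le.mpr fun a ha b hb => by
    show algebraMap (R ⧸ J) (torusLocalization 𝒜 J) (Ideal.Quotient.mk J (a * b)) ∈ A * B
    rw [map_mul, map_mul]
    exact Ideal.mul_mem_mul ha hb

lemma mem_ext_iff (P : Ideal R) {z : torusLocalization 𝒜 J} :
    z ∈ extendToLocalization 𝒜 J P ↔ ∃ p ∈ P, ∃ m ∈ eigenMonoid 𝒜 J,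
      z * algebraMap (R ⧸ J) (torusLocalization 𝒜 J) m
        = algebraMap (R ⧸ J) (torusLocalization 𝒜 J) (Ideal.Quotient.mk J p) := by
  rw [extendToLocalization, IsLocalization.mem_map_algebraMap_iff (eigenMonoid 𝒜 J)]
  constructor
  · rintro ⟨⟨i, m⟩, h⟩
    obtain ⟨p, hp, hip⟩ :=
      (Ideal.mem_map_iff_of_surjective _ Ideal.Quotient.mk_surjective).mp i.2
    exact ⟨p, hp, m, m.2, by rw [hip]; exact h⟩
  · rintro ⟨p, hp, m, hm, h⟩
    exact ⟨⟨⟨_, Ideal.mem_map_of_mem _ hp⟩, ⟨m, hm⟩⟩, h⟩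

lemma exists_inducedDerivation (hJp : J.IsPrime) (Δs : Set (Derivation k R R))
    (hJΔ : IsDeltaIdeal Δs J) {δ : Derivation k R R} (hδ : δ ∈ Δs) :
    ∃ D ∈ inducedDerivations 𝒜 J Δs, ∀ a : R,
      D (algebraMap (R ⧸ J) (torusLocalization 𝒜 J) (Ideal.Quotient.mk J a)) =
        algebraMap (R ⧸ J) (torusLocalization 𝒜 J) (Ideal.Quotient.mk J (δ a)) := by
  haveI := hJp
  haveI : IsDomain (R ⧸ J) := inferInstance
  have hprop : ∀ a : R,
      locDerivation (eigenMonoid 𝒜 J) (eigen_le_nzd 𝒜 J hJp) (quotDerivation J δ (hJΔ δ hδ))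
        (algebraMap (R ⧸ J) (torusLocalization 𝒜 J) (Ideal.Quotient.mk J a)) =
        algebraMap (R ⧸ J) (torusLocalization 𝒜 J) (Ideal.Quotient.mk J (δ a)) := by
    intro a
    rw [locDerivation_algebraMap, quotDerivation_mk]
  exact ⟨_, ⟨δ, hδ, hprop⟩, hprop⟩

lemma contract_ext_eq_self [IsNoetherianRing R] (hrat : IsRationalTorusAction ρ 𝒜)
    (Δs : Set (Derivation k R R)) {P : Ideal R} (hJp : J.IsPrime)
    (hΔP : IsDeltaPrime Δs P) (hcore : torusCore ρ P = J) :
    contractFromLocalization 𝒜 J (extendToLocalization 𝒜 J P) = P := by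
  haveI := hJp
  haveI : IsDomain (R ⧸ J) := inferInstance
  have hJP : J ≤ P := by rw [← hcore]; exact torusCore_le ρ P
  refine le_antisymm ?_ (le_contract_ext 𝒜 J P)
  intro x hx
  have hx' : algebraMap (R ⧸ J) (torusLocalization 𝒜 J) (Ideal.Quotient.mk J x)
      ∈ extendToLocalization 𝒜 J P := hx
  rw [mem_ext_iff] at hx'
  obtain ⟨p, hp, m, hm, hmx⟩ := hx'
  obtain ⟨e, he, rfl⟩ := eigenMonoid_lift 𝒜 J m hm
  rw [← _root_.map_mul, ← _root_.map_mul] at hmx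
  have hinj := IsLocalization.injective (torusLocalization 𝒜 J) (eigen_le_nzd 𝒜 J hJp)
  have h2 : x * e - p ∈ J := Ideal.Quotient.eq.mp (hinj hmx)
  have h3 : x * e ∈ P := by
    have := add_mem (hJP h2) hp
    simpa using this
  exact sat_of_deltaPrime ρ 𝒜 Δs hJp hΔP hcore hrat e he x (by rwa [mul_comm] at h3)

lemma ext_ne_top (hrat : IsRationalTorusAction ρ 𝒜) {P : Ideal R} (hJp : J.IsPrime)
    (hcore : torusCore ρ P = J) : extendToLocalization 𝒜 J P ≠ ⊤ := by
  haveI := hJp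
  haveI : IsDomain (R ⧸ J) := inferInstance
  have hJP : J ≤ P := by rw [← hcore]; exact torusCore_le ρ P
  intro htop
  have h1 : (1 : torusLocalization 𝒜 J) ∈ extendToLocalization 𝒜 J P :=
    htop ▸ Submodule.mem_top
  rw [mem_ext_iff] at h1
  obtain ⟨p, hp, m, hm, hmx⟩ := h1
  obtain ⟨e, he, rfl⟩ := eigenMonoid_lift 𝒜 J m hm
  rw [one_mul] at hmx
  have hinj := IsLocalization.injective (torusLocalization 𝒜 J) (eigen_le_nzd 𝒜 J hJp)
  have h2 : e - p ∈ J := Ideal.Quotient.eq.mp (hinj hmx)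
  have h3 : e ∈ P := by
    have := add_mem (hJP h2) hp
    simpa using this
  obtain ⟨⟨f, hf⟩, heJ⟩ := homMonoid_spec 𝒜 J hJp e he
  exact heJ (homog_mem_of_core ρ 𝒜 hrat hcore hf h3)

lemma inducedDeriv_mem_ext (Δs : Set (Derivation k R R)) {A : Ideal R}
    (hA : IsDeltaIdeal Δs A) {D : Derivation k (torusLocalization 𝒜 J) (torusLocalization 𝒜 J)}
    (hD : D ∈ inducedDerivations 𝒜 J Δs)
    {x : torusLocalization 𝒜 J} (hx : x ∈ extendToLocalization 𝒜 J A) :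
    D x ∈ extendToLocalization 𝒜 J A := by
  obtain ⟨δ, hδ, hDδ⟩ := hD
  rw [mem_ext_iff] at hx
  obtain ⟨a, ha, m, hm, hxm⟩ := hx
  have hu : IsUnit (algebraMap (R ⧸ J) (torusLocalization 𝒜 J) m) :=
    IsLocalization.map_units _ (⟨m, hm⟩ : eigenMonoid 𝒜 J)
  have hmemA : ∀ b ∈ A,
      algebraMap (R ⧸ J) (torusLocalization 𝒜 J) (Ideal.Quotient.mk J b)
        ∈ extendToLocalization 𝒜 J A := fun b hb =>
    Ideal.mem_map_of_mem _ (Ideal.mem_map_of_mem _ hb)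
  have hxe : x = algebraMap (R ⧸ J) (torusLocalization 𝒜 J) (Ideal.Quotient.mk J a)
      * ↑hu.unit⁻¹ := by
    rw [Units.eq_mul_inv_iff_mul_eq, IsUnit.unit_spec]
    exact hxm
  rw [hxe, Derivation.leibniz]
  simp only [smul_eq_mul]
  apply add_mem
  · exact Ideal.mul_mem_right _ _ (hmemA a ha)
  · rw [hDδ a]
    exact Ideal.mul_mem_left _ _ (hmemA _ (hA δ hδ a ha))

lemma ext_deltaPrime [IsNoetherianRing R] (hrat : IsRationalTorusAction ρ 𝒜)
    (Δs : Set (Derivation k R R)) {P : Ideal R} (hJp : J.IsPrime)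
    (hJΔ : IsDeltaIdeal Δs J) (hΔP : IsDeltaPrime Δs P) (hcore : torusCore ρ P = J) :
    IsDeltaPrime (inducedDerivations 𝒜 J Δs) (extendToLocalization 𝒜 J P) := by
  refine ⟨ext_ne_top ρ 𝒜 J hrat hJp hcore,
    fun D hD x hx => inducedDeriv_mem_ext 𝒜 J Δs hΔP.2.1 hD hx, ?_⟩
  intro A B hA hB hAB
  have hcA : IsDeltaIdeal Δs (contractFromLocalization 𝒜 J A) := by
    intro δ hδ x hx
    obtain ⟨D, hD, hcomp⟩ := exists_inducedDerivation 𝒜 J hJp Δs hJΔ hδ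
    show algebraMap (R ⧸ J) (torusLocalization 𝒜 J) (Ideal.Quotient.mk J (δ x)) ∈ A
    rw [← hcomp x]
    exact hA D hD _ hx
  have hcB : IsDeltaIdeal Δs (contractFromLocalization 𝒜 J B) := by
    intro δ hδ x hx
    obtain ⟨D, hD, hcomp⟩ := exists_inducedDerivation 𝒜 J hJp Δs hJΔ hδ
    show algebraMap (R ⧸ J) (torusLocalization 𝒜 J) (Ideal.Quotient.mk J (δ x)) ∈ B
    rw [← hcomp x]
    exact hB D hD _ hx
  have hprod : contractFromLocalization 𝒜 J A * contractFromLocalization 𝒜 J B ≤ P := by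
    refine le_trans (contract_mul_le 𝒜 J A B) ?_
    rw [← contract_ext_eq_self ρ 𝒜 J hrat Δs hJp hΔP hcore]
    exact contract_mono 𝒜 J hAB
  rcases hΔP.2.2 _ _ hcA hcB hprod with h | h
  · left
    calc A = extendToLocalization 𝒜 J (contractFromLocalization 𝒜 J A) :=
          (ext_contract_eq 𝒜 J A).symm
      _ ≤ extendToLocalization 𝒜 J P := ext_mono 𝒜 J h
  · right
    calc B = extendToLocalization 𝒜 J (contractFromLocalization 𝒜 J B) :=
          (ext_contract_eq 𝒜 J B).symm
      _ ≤ extendToLocalization 𝒜 J P := ext_mono 𝒜 J h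

lemma contract_deltaPrime (hrat : IsRationalTorusAction ρ 𝒜)
    (Δs : Set (Derivation k R R)) (hJp : J.IsPrime) (hJT : IsTorusIdeal ρ J)
    (hJΔ : IsDeltaIdeal Δs J) {Q : Ideal (torusLocalization 𝒜 J)}
    (hQ : IsDeltaPrime (inducedDerivations 𝒜 J Δs) Q) :
    IsDeltaPrime Δs (contractFromLocalization 𝒜 J Q) ∧
      torusCore ρ (contractFromLocalization 𝒜 J Q) = J := by
  classical
  haveI := hJp
  haveI : IsDomain (R ⧸ J) := inferInstance
  have hJle : J ≤ contractFromLocalization 𝒜 J Q := by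
    intro x hx
    show algebraMap (R ⧸ J) (torusLocalization 𝒜 J) (Ideal.Quotient.mk J x) ∈ Q
    rw [Ideal.Quotient.eq_zero_iff_mem.mpr hx, map_zero]
    exact Q.zero_mem
  constructor
  · refine ⟨?_, ?_, ?_⟩
    · intro htop
      apply hQ.1
      rw [Ideal.eq_top_iff_one]
      have h1 : (1 : R) ∈ contractFromLocalization 𝒜 J Q := htop ▸ Submodule.mem_top
      have h1' : algebraMap (R ⧸ J) (torusLocalization 𝒜 J) (Ideal.Quotient.mk J 1) ∈ Q := h1
      simpa using h1'
    · intro δ hδ x hx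
      obtain ⟨D, hD, hcomp⟩ := exists_inducedDerivation 𝒜 J hJp Δs hJΔ hδ
      show algebraMap (R ⧸ J) (torusLocalization 𝒜 J) (Ideal.Quotient.mk J (δ x)) ∈ Q
      rw [← hcomp x]
      exact hQ.2.1 D hD _ hx
    · intro A B hA hB hAB
      have hextA : IsDeltaIdeal (inducedDerivations 𝒜 J Δs) (extendToLocalization 𝒜 J A) :=
        fun D hD x hx => inducedDeriv_mem_ext 𝒜 J Δs hA hD hx
      have hextB : IsDeltaIdeal (inducedDerivations 𝒜 J Δs) (extendToLocalization 𝒜 J B) :=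
        fun D hD x hx => inducedDeriv_mem_ext 𝒜 J Δs hB hD hx
      have hle : extendToLocalization 𝒜 J A * extendToLocalization 𝒜 J B ≤ Q := by
        rw [← ext_mul 𝒜 J A B, ← ext_contract_eq 𝒜 J Q]
        exact ext_mono 𝒜 J (le_trans (le_trans (le_of_eq rfl) hAB) (le_refl _))
      rcases hQ.2.2 _ _ hextA hextB hle with h | h
      · left; exact le_trans (le_contract_ext 𝒜 J A) (contract_mono 𝒜 J h)
      · right; exact le_trans (le_contract_ext 𝒜 J B) (contract_mono 𝒜 J h)
  · refine le_antisymm ?_ ?_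
    · intro x hx
      rw [← DirectSum.sum_support_decompose 𝒜 x]
      apply sum_mem
      intro f _
      have hcomp : (DirectSum.decompose 𝒜 x f : R)
          ∈ torusCore ρ (contractFromLocalization 𝒜 J Q) :=
        component_mem_of_torusIdeal ρ 𝒜 hrat (fun h y hy => torusCore_stable ρ hy h) hx f
      by_contra hJf
      have hne : Ideal.Quotient.mk J (DirectSum.decompose 𝒜 x f : R) ≠ 0 := fun h0 =>
        hJf (Ideal.Quotient.eq_zero_iff_mem.mp h0)
      have hmem : Ideal.Quotient.mk J (DirectSum.decompose 𝒜 x f : R) ∈ eigenMonoid 𝒜 J :=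
        Submonoid.subset_closure ⟨hne, f, _, SetLike.coe_mem _, rfl⟩
      have hums : IsUnit (algebraMap (R ⧸ J) (torusLocalization 𝒜 J)
          (Ideal.Quotient.mk J (DirectSum.decompose 𝒜 x f : R))) :=
        IsLocalization.map_units _ (⟨_, hmem⟩ : eigenMonoid 𝒜 J)
      have hQmem : algebraMap (R ⧸ J) (torusLocalization 𝒜 J)
          (Ideal.Quotient.mk J (DirectSum.decompose 𝒜 x f : R)) ∈ Q :=
        torusCore_le ρ _ hcomp
      exact hQ.1 (Q.eq_top_of_isUnit_mem hQmem hums)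
    · intro x hx
      rw [torusCore, Submodule.mem_iInf]
      intro h
      rw [Ideal.mem_comap]
      exact hJle (hJT h x hx)

end LocAux


/-- Let `(R,Δ)` be a commutative differential `k`-algebra with `R`
noetherian, `H = (kˣ)^r` acting rationally on `(R,Δ)`, and `J` a prime `(H,Δ)`-ideal.
Then (a) `R_J`, the localization of `R/J` at its nonzero `H`-eigenvectors, is a graded
field for the induced grading, and (b) localization and contraction are mutually inverse
homeomorphisms between the stratum `Δ-spec_J R = {P : (P:H) = J}` and `Δ-spec R_J`. -/
theorem stratum_homeomorphic_deltaSpec_localization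
    {k R : Type*} [Field k] [CharZero k] [CommRing R] [Algebra k R] [IsNoetherianRing R]
    {r : ℕ} (ρ : (Fin r → kˣ) →* (R ≃ₐ[k] R))
    (𝒜 : (Fin r → ℤ) → Submodule k R) [GradedAlgebra 𝒜]
    (hrat : IsRationalTorusAction ρ 𝒜)
    (Δ : Submodule k (Derivation k R R)) (hΔ : IsRationalDeltaAction ρ Δ)
    (J : Ideal R) (hJprime : J.IsPrime)
    (hJ : IsTorusDeltaIdeal ρ (Δ : Set (Derivation k R R)) J) :
    -- (a) R_J is a graded field for the induced grading
    (IsDomain (torusLocalization 𝒜 J) ∧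
      ∀ x : torusLocalization 𝒜 J, IsHomogeneousFraction 𝒜 J x → x ≠ 0 → IsUnit x) ∧
    -- (b) localization maps the stratum into Δ-spec R_J, with inverse contraction
    (∀ P : Ideal R, IsDeltaPrime (Δ : Set (Derivation k R R)) P → torusCore ρ P = J →
      IsDeltaPrime (inducedDerivations 𝒜 J (Δ : Set (Derivation k R R)))
        (extendToLocalization 𝒜 J P) ∧
      contractFromLocalization 𝒜 J (extendToLocalization 𝒜 J P) = P) ∧
    -- contraction maps Δ-spec R_J into the stratum, with inverse localization
    (∀ Q : Ideal (torusLocalization 𝒜 J),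
      IsDeltaPrime (inducedDerivations 𝒜 J (Δ : Set (Derivation k R R))) Q →
      (IsDeltaPrime (Δ : Set (Derivation k R R)) (contractFromLocalization 𝒜 J Q) ∧
        torusCore ρ (contractFromLocalization 𝒜 J Q) = J) ∧
      extendToLocalization 𝒜 J (contractFromLocalization 𝒜 J Q) = Q) ∧
    -- both maps are continuous for the Zariski topologies (preimages of closed
    -- sets are closed), so they are mutually inverse homeomorphisms
    (∀ I : Ideal (torusLocalization 𝒜 J), ∃ I' : Ideal R,
      ∀ P : Ideal R, IsDeltaPrime (Δ : Set (Derivation k R R)) P → torusCore ρ P = J →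
        (I ≤ extendToLocalization 𝒜 J P ↔ I' ≤ P)) ∧
    (∀ I' : Ideal R, ∃ I : Ideal (torusLocalization 𝒜 J),
      ∀ Q : Ideal (torusLocalization 𝒜 J),
        IsDeltaPrime (inducedDerivations 𝒜 J (Δ : Set (Derivation k R R))) Q →
        (I' ≤ contractFromLocalization 𝒜 J Q ↔ I ≤ Q)) := by
  
  classical
  haveI := hJprime
  haveI hdomq : IsDomain (R ⧸ J) := inferInstance
  have hMle := eigen_le_nzd 𝒜 J hJprime
  haveI hLdom : IsDomain (torusLocalization 𝒜 J) := IsLocalization.isDomain_localization hMle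
  have hJΔ : IsDeltaIdeal (Δ : Set (Derivation k R R)) J := hJ.2
  have hJT : IsTorusIdeal ρ J := hJ.1
  refine ⟨⟨hLdom, ?_⟩, ?_, ?_, ?_, ?_⟩
  · rintro x ⟨g, g', a, s, haf, hsf, hs0, hx⟩ hx0
    have hsm : Ideal.Quotient.mk J s ∈ eigenMonoid 𝒜 J :=
      Submonoid.subset_closure ⟨hs0, g, s, hsf, rfl⟩
    have hsu : IsUnit (algebraMap (R ⧸ J) (torusLocalization 𝒜 J) (Ideal.Quotient.mk J s)) :=
      IsLocalization.map_units _ (⟨_, hsm⟩ : eigenMonoid 𝒜 J)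
    have ha0 : Ideal.Quotient.mk J a ≠ 0 := by
      intro h0
      rw [h0, map_zero] at hx
      rcases mul_eq_zero.mp hx with h | h
      · exact hx0 h
      · exact hsu.ne_zero h
    have ham : Ideal.Quotient.mk J a ∈ eigenMonoid 𝒜 J :=
      Submonoid.subset_closure ⟨ha0, g', a, haf, rfl⟩
    have hau : IsUnit (algebraMap (R ⧸ J) (torusLocalization 𝒜 J) (Ideal.Quotient.mk J a)) :=
      IsLocalization.map_units _ (⟨_, ham⟩ : eigenMonoid 𝒜 J)
    rw [← hx] at hau
    exact isUnit_of_mul_isUnit_left hau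
  · intro P hP hcore
    exact ⟨ext_deltaPrime ρ 𝒜 J hrat (Δ : Set (Derivation k R R)) hJprime hJΔ hP hcore,
      contract_ext_eq_self ρ 𝒜 J hrat (Δ : Set (Derivation k R R)) hJprime hP hcore⟩
  · intro Q hQ
    exact ⟨contract_deltaPrime ρ 𝒜 J hrat (Δ : Set (Derivation k R R)) hJprime hJT hJΔ hQ,
      ext_contract_eq 𝒜 J Q⟩
  · intro I
    refine ⟨contractFromLocalization 𝒜 J I, ?_⟩
    intro P hP hcore
    constructor
    · intro hIP
      rw [← contract_ext_eq_self ρ 𝒜 J hrat (Δ : Set (Derivation k R R)) hJprime hP hcore]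
      exact contract_mono 𝒜 J hIP
    · intro h
      calc I = extendToLocalization 𝒜 J (contractFromLocalization 𝒜 J I) :=
            (ext_contract_eq 𝒜 J I).symm
        _ ≤ extendToLocalization 𝒜 J P := ext_mono 𝒜 J h
  · intro I'
    refine ⟨extendToLocalization 𝒜 J I', fun Q hQ => ⟨fun h => ?_, fun h => ?_⟩⟩
    · rw [← ext_contract_eq 𝒜 J Q]
      exact ext_mono 𝒜 J h
    · exact le_trans (le_contract_ext 𝒜 J I') (contract_mono 𝒜 J h)
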